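/- arXiv:1204.3442 — 5 statements merged into one kernel-verified Lean document; each statement's English description precedes it below -/
import Mathlib

section
/- Let K be a field, I ⊆ K[X] an ideal with dim_K(K[X]/I) finite, and h ∈ K[X]. Then dim_K(K[X]/I) = dim_K(K[X]/(I + ⟨h⟩)) + dim_K(K[X]/(I : h)). -/
/-!
The cyclic `R`-submodule of `R ⧸ I` generated by the class of `h` is isomorphic to
`R ⧸ (I : h)` (its annihilator is `I : h`), and the quotient of `R ⧸ I` by it is
`R ⧸ (I + ⟨h⟩)`. Rank–nullity over `K` for this submodule gives the formula.
-/

open Module Submodule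

namespace Ideal

variable {K R : Type*} [CommRing R] (I : Ideal R) (h : R)

theorem torsionOf_mk_eq_colon_span_singleton :
    torsionOf R (R ⧸ I) (Quotient.mk I h) = I.colon (span {h}) := by
  ext x
  rw [mem_torsionOf_iff, mem_colon_span_singleton, Algebra.smul_def, Quotient.algebraMap_eq,
    ← map_mul, Quotient.eq_zero_iff_mem]

section CommRing

variable [CommRing K] [Algebra K R]

theorem finrank_quotient_colon_span_singleton :
    finrank K (R ⧸ I.colon (span {h})) = finrank K ((R ∙ Quotient.mk I h).restrictScalars K) := by
  rw [← torsionOf_mk_eq_colon_span_singleton]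
  exact ((quotTorsionOfEquivSpanSingleton R (R ⧸ I) (Quotient.mk I h)).restrictScalars K).finrank_eq

theorem finrank_quotient_sup_span_singleton :
    finrank K (R ⧸ (I ⊔ span {h})) =
      finrank K ((R ⧸ I) ⧸ (R ∙ Quotient.mk I h).restrictScalars K) := by
  have hmap : Submodule.map I.mkQ (span {h}) = R ∙ Quotient.mk I h := by
    rw [Submodule.map_span, Set.image_singleton]
    rfl
  have e := (quotientQuotientEquivQuotientSup I (span {h})).restrictScalars K
  rw [hmap] at e
  exact (e.symm.trans (Submodule.Quotient.restrictScalarsEquiv K _).symm).finrank_eq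

end CommRing

theorem finrank_quotient_eq_finrank_quotient_sup_span_singleton_add_finrank_quotient_colon
    [Field K] [Algebra K R] [FiniteDimensional K (R ⧸ I)] :
    finrank K (R ⧸ I) =
      finrank K (R ⧸ (I ⊔ span {h})) + finrank K (R ⧸ I.colon (span {h})) := by
  rw [finrank_quotient_sup_span_singleton, finrank_quotient_colon_span_singleton,
    finrank_quotient_add_finrank]

end Ideal

/-- Lemma 2.3(2): if `dim_K K[X]/I` is finite and `h ∈ K[X]`, then
`dim_K K[X]/I = dim_K K[X]/(I + ⟨h⟩) + dim_K K[X]/(I : h)`. -/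
theorem stmt_1 (K : Type*) [Field K] (n : ℕ)
    (I : Ideal (MvPolynomial (Fin n) K))
    (hI : FiniteDimensional K (MvPolynomial (Fin n) K ⧸ I))
    (h : MvPolynomial (Fin n) K) :
    Module.finrank K (MvPolynomial (Fin n) K ⧸ I) =
      Module.finrank K (MvPolynomial (Fin n) K ⧸ (I + Ideal.span {h})) +
      Module.finrank K (MvPolynomial (Fin n) K ⧸ (I.colon (Ideal.span {h}))) := by
  rw [Submodule.add_eq_sup]
  exact I.finrank_quotient_eq_finrank_quotient_sup_span_singleton_add_finrank_quotient_colon h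
end

section
/- Let K be a field and I ⊆ K[X] an ideal, h_1,...,h_l ∈ K[X]. Then √I = √(I + ⟨h_1,...,h_l⟩) ∩ ⋂_{i=1}^{l+1} √((I + ⟨h_1,...,h_{i-1}⟩) : h_i), where h_{l+1} = 1. -/
/-- Key two-term identity direction: `√(I+⟨a⟩) ⊓ √(I:a) ≤ √I`. -/
lemma radical_sup_inf_colon_le {R : Type*} [CommRing R] (I : Ideal R) (a : R) :
    (I + Ideal.span {a}).radical ⊓ (I.colon (Ideal.span {a})).radical ≤ I.radical := by
  rintro x ⟨hx1, hx2⟩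
  obtain ⟨m, hm⟩ := hx1
  obtain ⟨k, hk⟩ := hx2
  rw [Ideal.mem_colon_span_singleton] at hk
  rw [Ideal.add_eq_sup, Submodule.mem_sup] at hm
  obtain ⟨y, hy, z, hz, hyz⟩ := hm
  obtain ⟨c, hc⟩ := Ideal.mem_span_singleton.mp hz
  refine ⟨m + k, ?_⟩
  have : x ^ (m + k) = y * x ^ k + c * (x ^ k * a) := by
    rw [pow_add, ← hyz, hc]; ring
  rw [this]
  exact Ideal.add_mem _ (Ideal.mul_mem_right _ _ hy) (Ideal.mul_mem_left _ _ hk)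

/-- Iterating `√I = √(I+⟨h⟩) ∩ √(I:h)` for `h_1,…,h_l` (with `h_{l+1} = 1`):
`√I = √(I + ⟨h_1,…,h_l⟩) ∩ ⋂_{i=1}^{l} √((I + ⟨h_1,…,h_{i-1}⟩) : h_i)`
(the `(l+1)`-st term `√((I + ⟨h_1,…,h_l⟩) : 1) = √(I + ⟨h_1,…,h_l⟩)` is the first term). -/
theorem stmt_4 (K : Type*) [Field K] (n : ℕ) (l : ℕ)
    (I : Ideal (MvPolynomial (Fin n) K)) (h : Fin l → MvPolynomial (Fin n) K) :
    I.radical =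
      (I + Ideal.span (Set.range h)).radical ⊓
        ⨅ i : Fin l,
          ((I + Ideal.span (h '' {j : Fin l | j < i})).colon (Ideal.span {h i})).radical := by
  apply le_antisymm
  · refine le_inf (Ideal.radical_mono le_sup_left) (le_iInf fun i => Ideal.radical_mono ?_)
    intro f hf
    rw [Submodule.mem_colon]
    intro p _
    exact Ideal.mul_mem_right _ _ (Ideal.mem_sup_left hf)
  · set J : ℕ → Ideal (MvPolynomial (Fin n) K) :=
      fun k => I + Ideal.span (h '' {j : Fin l | (j : ℕ) < k}) with hJ
    rintro x ⟨hx1, hx2⟩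
    have key : ∀ k, k ≤ l → x ∈ (J k).radical → x ∈ I.radical := by
      intro k
      induction k with
      | zero =>
        intro _ hx
        have : J 0 = I := by
          have he : {j : Fin l | (j : ℕ) < 0} = ∅ := by ext j; simp
          simp [hJ, he]
        rwa [this] at hx
      | succ k ih =>
        intro hkl hx
        have hk : k < l := hkl
        have hcol : x ∈ ((J k).colon (Ideal.span {h ⟨k, hk⟩})).radical := by
          have := Ideal.mem_iInf.mp hx2 ⟨k, hk⟩
          have hset : {j : Fin l | j < (⟨k, hk⟩ : Fin l)} = {j : Fin l | (j : ℕ) < k} := by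
            ext j; simp [Fin.lt_def]
          rwa [hset] at this
        have hstep : J (k + 1) = J k + Ideal.span {h ⟨k, hk⟩} := by
          have hset : h '' {j : Fin l | (j : ℕ) < k + 1} =
              h '' {j : Fin l | (j : ℕ) < k} ∪ {h ⟨k, hk⟩} := by
            ext y
            simp only [Set.mem_image, Set.mem_union, Set.mem_singleton_iff, Set.mem_setOf_eq]
            constructor
            · rintro ⟨j, hj, rfl⟩
              rcases Nat.lt_succ_iff_lt_or_eq.mp hj with hj' | hj'
              · exact Or.inl ⟨j, hj', rfl⟩
              · exact Or.inr (by congr 1; exact Fin.ext hj')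
            · rintro (⟨j, hj, rfl⟩ | rfl)
              · exact ⟨j, Nat.lt_succ_of_lt hj, rfl⟩
              · exact ⟨⟨k, hk⟩, Nat.lt_succ_self k, rfl⟩
          simp only [hJ, hset, Ideal.span_union, Ideal.add_eq_sup, sup_assoc]
        rw [hstep] at hx
        exact ih (le_of_lt hk) (radical_sup_inf_colon_le (J k) (h ⟨k, hk⟩) ⟨hx, hcol⟩)
    apply key l le_rfl
    have : J l = I + Ideal.span (Set.range h) := by
      have : {j : Fin l | (j : ℕ) < l} = Set.univ := by
        ext j; simp [j.isLt]
      simp [hJ, this, Set.image_univ]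
    rwa [this]
end

section
/- Let K be a field, I ⊆ K[X] a zero-dimensional ideal, h_1,...,h_l ∈ K[X], and set h_{l+1} = 1. Then dim_K(K[X]/I) = Σ_{i=1}^{l+1} dim_K(K[X]/((I + ⟨h_1,...,h_{i-1}⟩) : h_i)). -/
/-!
Multiplication by `f` induces an exact sequence of `K`-vector spaces
`0 → R/(J : f) → R/J → R/(J + ⟨f⟩) → 0`, so
`dim R/J = dim R/(J : f) + dim R/(J + ⟨f⟩)`.
Applying this to `J = I + ⟨h_1, …, h_{i-1}⟩` and `f = h_i` for `i = 1, …, l` and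
telescoping gives the formula.
-/

open Module Ideal

section

variable {K R : Type*} [Field K] [CommRing R] [Algebra K R]

theorem Ideal.finiteDimensional_quotient_of_le {I J : Ideal R} (hIJ : I ≤ J)
    [FiniteDimensional K (R ⧸ I)] : FiniteDimensional K (R ⧸ J) :=
  .of_surjective (Quotient.factorₐ K hIJ).toLinearMap (Quotient.factor_surjective hIJ)

theorem Ideal.finrank_quotient_eq_finrank_quotient_colon_add (J : Ideal R) (f : R)
    [FiniteDimensional K (R ⧸ J)] :
    finrank K (R ⧸ J) = finrank K (R ⧸ J.colon (span {f})) + finrank K (R ⧸ (J ⊔ span {f})) := by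
  let φ : R →ₗ[K] R ⧸ J := (Quotient.mkₐ K J).toLinearMap ∘ₗ LinearMap.mulLeft K f
  let π : R ⧸ J →ₗ[K] R ⧸ (J ⊔ span {f}) := (Quotient.factorₐ K le_sup_left).toLinearMap
  have ker_φ : LinearMap.ker φ = (J.colon (span {f})).restrictScalars K := by
    ext x
    simp [φ, -map_mul, Quotient.eq_zero_iff_mem, mul_comm]
  have ker_π : LinearMap.ker π = LinearMap.range φ := by
    ext y
    have mem_ker_π : y ∈ LinearMap.ker π ↔ y ∈ span {Quotient.mk J f} := by
      change Quotient.factor le_sup_left y = 0 ↔ _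
      rw [← RingHom.mem_ker, Quotient.factor_ker, map_sup, map_quotient_self, bot_sup_eq,
        map_span, Set.image_singleton]
    simp [mem_ker_π, mem_span_singleton', φ, Quotient.mk_surjective.exists, mul_comm]
  calc finrank K (R ⧸ J) = finrank K (LinearMap.range π) + finrank K (LinearMap.ker π) :=
        (LinearMap.finrank_range_add_finrank_ker π).symm
    _ = finrank K (R ⧸ (J ⊔ span {f})) + finrank K (LinearMap.range φ) := by
        rw [LinearMap.range_eq_top.2 (Quotient.factor_surjective le_sup_left), finrank_top, ker_π]
    _ = _ := by
        rw [add_comm, (φ.quotKerEquivRange.symm ≪≫ₗ Submodule.quotEquivOfEq _ _ ker_φ ≪≫ₗ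
          Submodule.Quotient.restrictScalarsEquiv K _).finrank_eq]

theorem Ideal.finrank_quotient_eq_sum_finrank_quotient_colon_add {ι : Type*} [LinearOrder ι]
    (I : Ideal R) [FiniteDimensional K (R ⧸ I)] (h : ι → R) (s : Finset ι) :
    finrank K (R ⧸ I) =
      ∑ i ∈ s, finrank K (R ⧸ (I ⊔ span (h '' {j | j ∈ s ∧ j < i})).colon (span {h i})) +
        finrank K (R ⧸ (I ⊔ span (h '' s))) := by
  induction s using Finset.induction_on_max with
  | empty => rw [Finset.coe_empty, Set.image_empty, span_empty, sup_bot_eq]; simp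
  | insert a s ha ih =>
    have : FiniteDimensional K (R ⧸ (I ⊔ span (h '' s))) :=
      finiteDimensional_quotient_of_le le_sup_left
    have below_a : {j | j ∈ insert a s ∧ j < a} = (s : Set ι) := by
      ext j
      simp only [Finset.mem_insert, Set.mem_ofPred_eq, Finset.mem_coe]
      exact ⟨fun ⟨hj, hja⟩ => hj.resolve_left hja.ne, fun hj => ⟨.inr hj, ha j hj⟩⟩
    have below_mem (i : ι) (hi : i ∈ s) :
        {j | j ∈ insert a s ∧ j < i} = {j | j ∈ s ∧ j < i} := by
      ext j
      simp only [Finset.mem_insert, Set.mem_ofPred_eq]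
      exact ⟨fun ⟨hj, hji⟩ => ⟨hj.resolve_left (hji.trans (ha i hi)).ne, hji⟩,
        fun ⟨hj, hji⟩ => ⟨.inr hj, hji⟩⟩
    have span_insert_a : I ⊔ span (h '' ↑(insert a s)) = I ⊔ span (h '' s) ⊔ span {h a} := by
      rw [Finset.coe_insert, Set.image_insert_eq, span_insert, sup_comm (span {h a}), sup_assoc]
    rw [Finset.sum_insert fun has => (ha a has).false,
      Finset.sum_congr rfl fun i hi => by rw [below_mem i hi], below_a, span_insert_a, ih,
      finrank_quotient_eq_finrank_quotient_colon_add (I ⊔ span (h '' s)) (h a)]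
    ring

end

/-- For a zero-dimensional ideal `I ⊆ K[X]`, `h_1,…,h_l ∈ K[X]` and `h_{l+1} = 1`:
`dim_K K[X]/I = Σ_{i=1}^{l+1} dim_K K[X]/((I + ⟨h_1,…,h_{i-1}⟩) : h_i)`;
since `h_{l+1} = 1`, the last summand is `dim_K K[X]/(I + ⟨h_1,…,h_l⟩)`. -/
theorem stmt_5 (K : Type*) [Field K] (n : ℕ) (l : ℕ)
    (I : Ideal (MvPolynomial (Fin n) K))
    (hI : FiniteDimensional K (MvPolynomial (Fin n) K ⧸ I))
    (h : Fin l → MvPolynomial (Fin n) K) :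
    Module.finrank K (MvPolynomial (Fin n) K ⧸ I) =
      (∑ i : Fin l,
        Module.finrank K (MvPolynomial (Fin n) K ⧸
          ((I + Ideal.span (h '' {j : Fin l | j < i})).colon (Ideal.span {h i})))) +
      Module.finrank K (MvPolynomial (Fin n) K ⧸ (I + Ideal.span (Set.range h))) := by
  have := hI
  rw [finrank_quotient_eq_sum_finrank_quotient_colon_add (K := K) I h Finset.univ,
    Finset.coe_univ, Set.image_univ, Submodule.add_eq_sup]
  congr 1
  refine Finset.sum_congr rfl fun i _ => ?_
  rw [show {j | j ∈ Finset.univ ∧ j < i} = {j | j < i} by simp, Submodule.add_eq_sup]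
end

section
/- In Q[x_1,x_2], let G = ⟨x_2^10, x_1·x_2^3 + x_2^5, x_1^11⟩, F_1 = ⟨x_2^7, x_1 + x_2^2⟩, F_2 = ⟨x_2^3, x_1^11⟩. Then G ⊆ F_1 ∩ F_2 and G ≠ F_1 ∩ F_2. -/
/-!
Every generator of `G` lies in both `F₁` and `F₂`, while `x₂ ^ 7 ∈ F₁ ∩ F₂` is not in `G`.
To see the latter, restrict to the curve `x₁ = -x₂ ^ 2`, parametrised by `t ↦ (-t ^ 2, t)`:
there `x₁ x₂ ^ 3 + x₂ ^ 5` vanishes and `x₂ ^ 10`, `x₁ ^ 11` become multiples of `t ^ 10`,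
so every element of `G` restricts into `(t ^ 10)`, but `x₂ ^ 7` restricts to `t ^ 7`.
-/

open MvPolynomial

namespace IdealIntersectionExample

local notation "x₁" => (X 0 : MvPolynomial (Fin 2) ℚ)
local notation "x₂" => (X 1 : MvPolynomial (Fin 2) ℚ)
local notation "t" => (Polynomial.X : Polynomial ℚ)

noncomputable abbrev G : Ideal (MvPolynomial (Fin 2) ℚ) :=
  Ideal.span {x₂ ^ 10, x₁ * x₂ ^ 3 + x₂ ^ 5, x₁ ^ 11}

noncomputable abbrev F₁ : Ideal (MvPolynomial (Fin 2) ℚ) :=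
  Ideal.span {x₂ ^ 7, x₁ + x₂ ^ 2}

noncomputable abbrev F₂ : Ideal (MvPolynomial (Fin 2) ℚ) :=
  Ideal.span {x₂ ^ 3, x₁ ^ 11}

theorem x₁_pow_eleven_mem_F₁ : x₁ ^ 11 ∈ F₁ := by
  obtain ⟨c, hc⟩ := sub_dvd_pow_sub_pow x₁ (-x₂ ^ 2) 11
  exact Ideal.mem_span_pair.2 ⟨-x₂ ^ 15, c, by linear_combination -hc⟩

theorem G_le_F₁ : G ≤ F₁ := by
  simp only [G, Ideal.span_le, Set.insert_subset_iff, Set.singleton_subset_iff, SetLike.mem_coe]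
  exact ⟨Ideal.mem_span_pair.2 ⟨x₂ ^ 3, 0, by ring⟩,
    Ideal.mem_span_pair.2 ⟨0, x₂ ^ 3, by ring⟩, x₁_pow_eleven_mem_F₁⟩

theorem G_le_F₂ : G ≤ F₂ := by
  simp only [G, Ideal.span_le, Set.insert_subset_iff, Set.singleton_subset_iff, SetLike.mem_coe]
  exact ⟨Ideal.mem_span_pair.2 ⟨x₂ ^ 7, 0, by ring⟩,
    Ideal.mem_span_pair.2 ⟨x₁ + x₂ ^ 2, 0, by ring⟩,
    Ideal.mem_span_pair.2 ⟨0, 1, by ring⟩⟩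

theorem x₂_pow_seven_mem_inf : x₂ ^ 7 ∈ F₁ ⊓ F₂ :=
  ⟨Ideal.subset_span (by simp), Ideal.mem_span_pair.2 ⟨x₂ ^ 4, 0, by ring⟩⟩

noncomputable abbrev restrictToCurve : MvPolynomial (Fin 2) ℚ →ₐ[ℚ] Polynomial ℚ :=
  aeval ![-t ^ 2, t]

theorem G_le_comap_restrictToCurve :
    G ≤ Ideal.comap restrictToCurve (Ideal.span {t ^ 10}) := by
  simp only [G, Ideal.span_le, Set.insert_subset_iff, Set.singleton_subset_iff, SetLike.mem_coe,
    Ideal.mem_comap, Ideal.mem_span_singleton, map_add, map_mul, map_pow, aeval_X,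
    Matrix.cons_val_zero, Matrix.cons_val_one]
  exact ⟨dvd_rfl, ⟨0, by ring⟩, ⟨-t ^ 12, by ring⟩⟩

theorem x₂_pow_seven_not_mem_G : x₂ ^ 7 ∉ G := by
  intro h
  have h_dvd : t ^ 10 ∣ t ^ 7 := by
    simpa [Ideal.mem_span_singleton] using G_le_comap_restrictToCurve h
  have h_le : 10 ≤ 7 := (pow_dvd_pow_iff Polynomial.X_ne_zero Polynomial.not_isUnit_X).1 h_dvd
  omega

end IdealIntersectionExample

open IdealIntersectionExample in
/-- In `ℚ[x_1,x_2]` (with `x_1 = X 0`, `x_2 = X 1`), for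
`G = ⟨x_2^10, x_1 x_2^3 + x_2^5, x_1^11⟩`, `F_1 = ⟨x_2^7, x_1 + x_2^2⟩`,
`F_2 = ⟨x_2^3, x_1^11⟩` one has `G ⊆ F_1 ∩ F_2` and `G ≠ F_1 ∩ F_2`. -/
theorem stmt_10 :
    Ideal.span {(X 1 : MvPolynomial (Fin 2) ℚ) ^ 10, X 0 * X 1 ^ 3 + X 1 ^ 5, X 0 ^ 11} ≤
        Ideal.span {(X 1 : MvPolynomial (Fin 2) ℚ) ^ 7, X 0 + X 1 ^ 2} ⊓
          Ideal.span {(X 1 : MvPolynomial (Fin 2) ℚ) ^ 3, X 0 ^ 11} ∧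
      Ideal.span {(X 1 : MvPolynomial (Fin 2) ℚ) ^ 10, X 0 * X 1 ^ 3 + X 1 ^ 5, X 0 ^ 11} ≠
        Ideal.span {(X 1 : MvPolynomial (Fin 2) ℚ) ^ 7, X 0 + X 1 ^ 2} ⊓
          Ideal.span {(X 1 : MvPolynomial (Fin 2) ℚ) ^ 3, X 0 ^ 11} := by
  show G ≤ F₁ ⊓ F₂ ∧ G ≠ F₁ ⊓ F₂
  exact ⟨le_inf G_le_F₁ G_le_F₂,
    fun h => x₂_pow_seven_not_mem_G (h ▸ x₂_pow_seven_mem_inf)⟩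
end

section
/- Let K be a field and m ⊆ K[x_1,...,x_n] a maximal ideal. Then for the lexicographical ordering x_1 > ... > x_n, a minimal Gröbner basis G of m is a triangular set: it consists of n polynomials f_1,...,f_n with leading term of f_i equal to x_{n-i+1}^{α_i} for some α_i > 0. -/
open MvPolynomial

/-- The leading monomial (multidegree) of a multivariate polynomial with respect to the
lexicographical ordering in which `x_1 = X 0 > x_2 = X 1 > … > x_n = X (n-1)`. -/
noncomputable def leadingMonomial {K : Type*} [Field K] {n : ℕ}
    (f : MvPolynomial (Fin n) K) : Fin n →₀ ℕ :=
  ofLex (f.support.sup fun d => toLex d)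

/-- `G` is a Gröbner basis of `I` (w.r.t. the lex ordering above): `G ⊆ I` and the leading
monomial of every nonzero element of `I` is divisible by the leading monomial of some
element of `G`. -/
def IsGroebnerBasis {K : Type*} [Field K] {n : ℕ}
    (I : Ideal (MvPolynomial (Fin n) K)) (G : Finset (MvPolynomial (Fin n) K)) : Prop :=
  ↑G ⊆ (I : Set (MvPolynomial (Fin n) K)) ∧
    ∀ f ∈ I, f ≠ 0 → ∃ g ∈ G, g ≠ 0 ∧ leadingMonomial g ≤ leadingMonomial f

/-- A minimal Gröbner basis: a Gröbner basis consisting of monic polynomials such that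
no leading monomial of one element divides the leading monomial of another. -/
def IsMinimalGroebnerBasis {K : Type*} [Field K] {n : ℕ}
    (I : Ideal (MvPolynomial (Fin n) K)) (G : Finset (MvPolynomial (Fin n) K)) : Prop :=
  IsGroebnerBasis I G ∧ (∀ g ∈ G, g ≠ 0 ∧ coeff (leadingMonomial g) g = 1) ∧
    ∀ g ∈ G, ∀ g' ∈ G, g ≠ g' → ¬ leadingMonomial g ≤ leadingMonomial g'

/-!
By Zariski's lemma `K[x]/m` is a finite extension of `K`, so each `xᵢ` satisfies a nonzero
polynomial lying in `m ∩ K[xᵢ]`; hence `G` contains an element whose leading monomial is a pure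
power of `xᵢ`, and by minimality exactly one.

Conversely, let `g ∈ G` have leading monomial `μ`, let `xᵢ` be the largest variable occurring
in `μ` and `a` its exponent. All monomials of `g` avoid the variables larger than `xᵢ` and have
`xᵢ`-degree at most `a`, so `g = c xᵢ^a + r` with `c ∈ K[x_{>i}]` and `deg_{xᵢ} r < a`. The
leading monomial of `c` is `μ / xᵢ^a`, so minimality gives `c ∉ m`. The image of `K[x_{>i}]` in
the algebraic extension `K[x]/m` is a field, so `u c ≡ 1 (mod m)` for some `u ∈ K[x_{>i}]`.
Then `u g - (u c - 1) xᵢ^a = u r + xᵢ^a ∈ m` has leading monomial `xᵢ^a`, which divides `μ`;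
minimality forces `μ = xᵢ^a`.
-/

namespace Finsupp

variable {σ : Type*} [LinearOrder σ] {d μ : σ →₀ ℕ} {i : σ}

theorem exists_forall_lt_eq_zero_of_ne_zero (hμ : μ ≠ 0) :
    ∃ i, (∀ j < i, μ j = 0) ∧ 0 < μ i := by
  have hs := support_nonempty_iff.mpr hμ
  refine ⟨μ.support.min' hs, fun j hj => notMem_support_iff.mp fun hmem => ?_,
    Nat.pos_of_ne_zero (mem_support_iff.mp (μ.support.min'_mem hs))⟩
  exact (μ.support.min'_le j hmem).not_gt hj

theorem forall_lt_eq_zero_of_toLex_le (hμ : ∀ j < i, μ j = 0) (h : toLex d ≤ toLex μ) :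
    (∀ j < i, d j = 0) ∧ d i ≤ μ i := by
  rcases h.eq_or_lt with h | h
  · rw [toLex_inj.mp h]
    exact ⟨hμ, le_rfl⟩
  obtain ⟨k, hk, hlt⟩ := Lex.lt_iff.mp h
  have hik : i ≤ k := not_lt.mp fun hki => by simp [hμ k hki] at hlt
  refine ⟨fun j hj => (hk j (hj.trans_le hik)).trans (hμ j hj), ?_⟩
  rcases hik.eq_or_lt with rfl | hik
  · exact hlt.le
  · exact (hk i hik).le

theorem toLex_lt_single (hd : ∀ j < i, d j = 0) {a : ℕ} (hda : d i < a) :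
    toLex d < toLex (single i a) :=
  Lex.lt_iff.mpr ⟨i, fun j hj => by simp [hd j hj, hj.ne'], by simpa using hda⟩

end Finsupp

theorem Ideal.exists_mul_sub_one_mem {K A : Type*} [Field K] [CommRing A] [Algebra K A]
    {m : Ideal A} [m.IsMaximal] [Algebra.IsAlgebraic K (A ⧸ m)] (S : Subalgebra K A)
    {c : A} (hc : c ∈ S) (hcm : c ∉ m) : ∃ u ∈ S, u * c - 1 ∈ m := by
  let _ : Field (A ⧸ m) := Ideal.Quotient.field m
  let π := Ideal.Quotient.mkₐ K m
  have hS : IsField (S.map π) := Subalgebra.isField_of_algebraic _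
  have hc0 : (⟨π c, Subalgebra.mem_map.mpr ⟨c, hc, rfl⟩⟩ : S.map π) ≠ 0 := fun h =>
    hcm (Ideal.Quotient.eq_zero_iff_mem.mp (congrArg Subtype.val h))
  obtain ⟨⟨y, hy⟩, hcy⟩ := hS.mul_inv_cancel hc0
  obtain ⟨u, hu, rfl⟩ := Subalgebra.mem_map.mp hy
  refine ⟨u, hu, Ideal.Quotient.eq_zero_iff_mem.mp ?_⟩
  have : π c * π u = 1 := congrArg Subtype.val hcy
  rw [map_sub, map_one, map_mul, mul_comm, ← Ideal.Quotient.mkₐ_eq_mk K m]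
  exact sub_eq_zero.mpr this

namespace MvPolynomial

variable {σ R : Type*} [CommSemiring R]

theorem mem_supported_iff_forall_support {s : Set σ} {p : MvPolynomial σ R} :
    p ∈ supported R s ↔ ∀ d ∈ p.support, ↑d.support ⊆ s := by
  rw [mem_supported]
  constructor
  · exact fun h d hd j hj => h ((mem_vars_iff_mem_support j).mpr ⟨d, hd, hj⟩)
  · intro h j hj
    obtain ⟨d, hd, hjd⟩ := (mem_vars_iff_mem_support j).mp hj
    exact h d hd hjd

theorem mem_support_modMonomial {p : MvPolynomial σ R} {s d : σ →₀ ℕ} :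
    d ∈ (p.modMonomial s).support ↔ d ∈ p.support ∧ ¬ s ≤ d := by
  by_cases h : s ≤ d <;>
    simp [mem_support_iff, coeff_modMonomial_of_le, coeff_modMonomial_of_not_le, h]

section LinearOrder

variable [LinearOrder σ] {g : MvPolynomial σ R} {i : σ} {a : ℕ}

theorem divMonomial_single_mem_supported
    (hg : ∀ d ∈ g.support, (∀ j < i, d j = 0) ∧ d i ≤ a) :
    g.divMonomial (Finsupp.single i a) ∈ supported R {j | i < j} := by
  refine mem_supported_iff_forall_support.mpr fun e he j hj => ?_
  rw [MvPolynomial.mem_support_iff, coeff_divMonomial, ← MvPolynomial.mem_support_iff] at he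
  have hei : e i = 0 := by simpa using (hg _ he).2
  have hej (k) (hk : k < i) : e k = 0 := by simpa [hk.ne] using (hg _ he).1 k hk
  exact lt_of_not_ge fun hji => Finsupp.mem_support_iff.mp hj <|
    hji.lt_or_eq.elim (hej j) fun h => h ▸ hei

theorem modMonomial_single_support
    (hg : ∀ d ∈ g.support, (∀ j < i, d j = 0) ∧ d i ≤ a) :
    ∀ d ∈ (g.modMonomial (Finsupp.single i a)).support, (∀ j < i, d j = 0) ∧ d i < a := by
  intro d hd
  obtain ⟨hdg, hd_not_le⟩ := mem_support_modMonomial.mp hd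
  exact ⟨(hg d hdg).1,
    (hg d hdg).2.lt_of_ne fun h => hd_not_le (Finsupp.single_le_iff.mpr h.ge)⟩

end LinearOrder

theorem isIntegral_quotient_of_isMaximal {K : Type*} [Field K] [Finite σ]
    (m : Ideal (MvPolynomial σ K)) [m.IsMaximal] :
    Algebra.IsIntegral K (MvPolynomial σ K ⧸ m) := by
  let _ : Field (MvPolynomial σ K ⧸ m) := Ideal.Quotient.field m
  have := finite_of_finite_type_of_isJacobsonRing K (MvPolynomial σ K ⧸ m)
  infer_instance

theorem exists_ne_zero_mem_supported_singleton {K : Type*} [Field K] [Finite σ]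
    {m : Ideal (MvPolynomial σ K)} (hm : m.IsMaximal) (i : σ) :
    ∃ q ∈ m, q ≠ 0 ∧ q ∈ supported K {i} := by
  have := isIntegral_quotient_of_isMaximal m
  set x := Ideal.Quotient.mkₐ K m (X i)
  have hx : IsIntegral K x := Algebra.IsIntegral.isIntegral x
  refine ⟨Polynomial.toMvPolynomial i (minpoly K x), ?_, ?_, ?_⟩
  · rw [← Ideal.Quotient.eq_zero_iff_mem, ← Ideal.Quotient.mkₐ_eq_mk K m,
      Polynomial.toMvPolynomial, ← Polynomial.aeval_algHom_apply]
    exact minpoly.aeval K _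
  · exact (map_ne_zero_iff _ (Polynomial.toMvPolynomial_injective i)).mpr (minpoly.ne_zero hx)
  · rw [supported_eq_adjoin_X, Set.image_singleton]
    exact Polynomial.aeval_mem_adjoin_singleton K _

end MvPolynomial

namespace MonomialOrder

variable {σ R : Type*} [CommSemiring R] (m : MonomialOrder σ) {f : MvPolynomial σ R}
  {s : σ →₀ ℕ}

theorem degree_divMonomial (hs : s ≤ m.degree f) :
    m.degree (f.divMonomial s) = m.degree f - s := by
  rcases eq_or_ne f 0 with rfl | hf
  · simp
  apply m.toSyn.injective
  refine le_antisymm (m.degree_le_iff.mpr fun e he => ?_) (m.le_degree ?_)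
  · rw [MvPolynomial.mem_support_iff, coeff_divMonomial, ← MvPolynomial.mem_support_iff] at he
    have := m.le_degree he
    rwa [← add_tsub_cancel_of_le hs, map_add, map_add, add_le_add_iff_left] at this
  · rw [MvPolynomial.mem_support_iff, coeff_divMonomial, add_tsub_cancel_of_le hs]
    exact m.coeff_degree_ne_zero_iff.mpr hf

theorem leadingCoeff_divMonomial (hs : s ≤ m.degree f) :
    m.leadingCoeff (f.divMonomial s) = m.leadingCoeff f := by
  rw [leadingCoeff, m.degree_divMonomial hs, coeff_divMonomial, add_tsub_cancel_of_le hs,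
    leadingCoeff]

theorem degree_ne_zero_of_mem {K : Type*} [Field K] {I : Ideal (MvPolynomial σ K)} (hI : I ≠ ⊤)
    {f : MvPolynomial σ K} (hf : f ∈ I) (hf0 : f ≠ 0) : m.degree f ≠ 0 := by
  intro h
  rw [m.eq_C_of_degree_eq_zero h] at hf hf0
  exact hI (I.eq_top_of_isUnit_mem hf ((isUnit_iff_ne_zero.mpr (by simpa using hf0)).map C))

variable [LinearOrder σ] [WellFoundedGT σ]

theorem degree_lex_mul_add_X_pow [Nontrivial R] {i : σ} {a : ℕ} (ha : 0 < a)
    {u r : MvPolynomial σ R} (hu : u ∈ supported R {j | i < j})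
    (hr : ∀ d ∈ r.support, (∀ j < i, d j = 0) ∧ d i < a) :
    lex.degree (u * r + X i ^ a) = Finsupp.single i a := by
  classical
  have hXa : lex.degree (X i ^ a : MvPolynomial σ R) = Finsupp.single i a := by
    rw [X_pow_eq_monomial, degree_monomial, if_neg one_ne_zero]
  have hlt : lex.toSyn (lex.degree (u * r)) < lex.toSyn (Finsupp.single i a) := by
    refine (degree_lt_iff (Finsupp.toLex_lt_single (by simp) ha)).mpr fun d hd => ?_
    obtain ⟨e, he, d', hd', rfl⟩ := Finset.mem_add.mp (support_mul u r hd)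
    have hei : ∀ j ≤ i, e j = 0 := fun j hj => Finsupp.notMem_support_iff.mp fun hje =>
      (mem_supported_iff_forall_support.mp hu e he hje).not_ge hj
    exact Finsupp.toLex_lt_single (fun j hj => by simp [hei j hj.le, (hr d' hd').1 j hj])
      (by simpa [hei i le_rfl] using (hr d' hd').2)
  rw [add_comm, degree_add_of_lt (hXa ▸ hlt), hXa]

end MonomialOrder

theorem leadingMonomial_eq_lex_degree {K : Type*} [Field K] {n : ℕ}
    (f : MvPolynomial (Fin n) K) : leadingMonomial f = MonomialOrder.lex.degree f :=
  rfl

section GroebnerBasis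

open MonomialOrder

variable {K : Type*} [Field K] {n : ℕ} {I : Ideal (MvPolynomial (Fin n) K)}
  {G : Finset (MvPolynomial (Fin n) K)}

theorem IsGroebnerBasis.exists_leadingMonomial_eq_single (hG : IsGroebnerBasis I G)
    (hI : I.IsMaximal) (i : Fin n) :
    ∃ g ∈ G, ∃ b, 0 < b ∧ leadingMonomial g = Finsupp.single i b := by
  obtain ⟨q, hqI, hq0, hqi⟩ := exists_ne_zero_mem_supported_singleton hI i
  obtain ⟨g, hgG, hg0, hgq⟩ := hG.2 q hqI hq0
  have hgi : (leadingMonomial g).support ⊆ {i} := by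
    refine (Finsupp.support_mono hgq).trans fun j hj => ?_
    simpa using mem_supported_iff_forall_support.mp hqi _
      (lex.degree_mem_support hq0) hj
  have hg_single := Finsupp.support_subset_singleton.mp hgi
  refine ⟨g, hgG, _, Nat.pos_of_ne_zero fun h => ?_, hg_single⟩
  refine lex.degree_ne_zero_of_mem hI.ne_top (hG.1 hgG) hg0 ?_
  rw [← leadingMonomial_eq_lex_degree, hg_single, h, Finsupp.single_zero]

namespace IsMinimalGroebnerBasis

theorem eq_of_leadingMonomial_le (hG : IsMinimalGroebnerBasis I G)
    {g g' : MvPolynomial (Fin n) K} (hg : g ∈ G) (hg' : g' ∈ G)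
    (h : leadingMonomial g ≤ leadingMonomial g') : g = g' :=
  by_contra fun hne => hG.2.2 g hg g' hg' hne h

theorem leadingMonomial_eq_of_le (hG : IsMinimalGroebnerBasis I G)
    {f g : MvPolynomial (Fin n) K} (hg : g ∈ G) (hf : f ∈ I) (hf0 : f ≠ 0)
    (h : leadingMonomial f ≤ leadingMonomial g) :
    leadingMonomial f = leadingMonomial g := by
  obtain ⟨g', hg', -, hg'f⟩ := hG.1.2 f hf hf0
  obtain rfl := hG.eq_of_leadingMonomial_le hg' hg (hg'f.trans h)
  exact le_antisymm h hg'f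

theorem eq_of_leadingMonomial_eq_single (hG : IsMinimalGroebnerBasis I G)
    {g g' : MvPolynomial (Fin n) K} (hg : g ∈ G) (hg' : g' ∈ G) {i : Fin n} {a b : ℕ}
    (ha : leadingMonomial g = Finsupp.single i a)
    (hb : leadingMonomial g' = Finsupp.single i b) : g = g' := by
  rcases le_total a b with h | h
  · exact hG.eq_of_leadingMonomial_le hg hg' (by rwa [ha, hb, Finsupp.single_le_single])
  · exact (hG.eq_of_leadingMonomial_le hg' hg (by rwa [ha, hb, Finsupp.single_le_single])).symm

theorem divMonomial_notMem (hG : IsMinimalGroebnerBasis I G) {g : MvPolynomial (Fin n) K}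
    (hg : g ∈ G) {s : Fin n →₀ ℕ} (hs : s ≤ leadingMonomial g) (hs0 : s ≠ 0) :
    g.divMonomial s ∉ I := by
  intro hgsI
  have hg0 : g ≠ 0 := (hG.2.1 g hg).1
  have hgs_deg : leadingMonomial (g.divMonomial s) = leadingMonomial g - s :=
    lex.degree_divMonomial hs
  have hgs0 : g.divMonomial s ≠ 0 := by
    rw [← lex.leadingCoeff_ne_zero_iff, lex.leadingCoeff_divMonomial hs]
    exact lex.leadingCoeff_ne_zero_iff.mpr hg0
  have h := hG.leadingMonomial_eq_of_le hg hgsI hgs0 (hgs_deg ▸ tsub_le_self)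
  rw [hgs_deg, tsub_eq_iff_eq_add_of_le hs] at h
  exact hs0 (left_eq_add.mp h)

theorem exists_leadingMonomial_eq_single (hG : IsMinimalGroebnerBasis I G) (hI : I.IsMaximal)
    {g : MvPolynomial (Fin n) K} (hg : g ∈ G) :
    ∃ i b, 0 < b ∧ leadingMonomial g = Finsupp.single i b := by
  have := hI
  have := isIntegral_quotient_of_isMaximal I
  have hgI : g ∈ I := hG.1.1 hg
  have hg0 : g ≠ 0 := (hG.2.1 g hg).1
  obtain ⟨i, hμi, ha⟩ := Finsupp.exists_forall_lt_eq_zero_of_ne_zero (μ := leadingMonomial g)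
    (lex.degree_ne_zero_of_mem hI.ne_top hgI hg0)
  refine ⟨i, _, ha, ?_⟩
  set a := leadingMonomial g i
  have hsupp (d) (hd : d ∈ g.support) : (∀ j < i, d j = 0) ∧ d i ≤ a :=
    Finsupp.forall_lt_eq_zero_of_toLex_le hμi (lex.le_degree hd)
  have haμ : Finsupp.single i a ≤ leadingMonomial g := Finsupp.single_le_iff.mpr le_rfl
  set c := g.divMonomial (Finsupp.single i a)
  have hcI : c ∉ I := hG.divMonomial_notMem hg haμ (by simpa using ha.ne')
  obtain ⟨u, hu, huc⟩ := Ideal.exists_mul_sub_one_mem _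
    (divMonomial_single_mem_supported hsupp) hcI
  set r := g.modMonomial (Finsupp.single i a)
  have hhI : u * r + X i ^ a ∈ I := by
    have hg_eq : c * X i ^ a + r = g := by
      rw [X_pow_eq_monomial, mul_comm]
      exact divMonomial_add_modMonomial g (Finsupp.single i a)
    have : u * r + X i ^ a = u * g - (u * c - 1) * X i ^ a := by
      linear_combination u * hg_eq
    rw [this]
    exact I.sub_mem (I.mul_mem_left u hgI) (I.mul_mem_right _ huc)
  have hh_deg : leadingMonomial (u * r + X i ^ a) = Finsupp.single i a :=
    degree_lex_mul_add_X_pow ha hu (modMonomial_single_support hsupp)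
  have hh0 : u * r + X i ^ a ≠ 0 := ne_zero_of_degree_ne_zero (m := .lex) <| by
    rw [← leadingMonomial_eq_lex_degree, hh_deg]
    simpa using ha.ne'
  exact (hh_deg.symm.trans (hG.leadingMonomial_eq_of_le hg hhI hh0 (hh_deg ▸ haμ))).symm

end IsMinimalGroebnerBasis

end GroebnerBasis

/-- A minimal Gröbner basis of a maximal ideal `m ⊆ K[x_1,…,x_n]` w.r.t. the lex ordering
`x_1 > … > x_n` is a triangular set: it consists of `n` polynomials `f_1,…,f_n` such that
the leading term of `f_i` is `x_{n-i+1}^{α_i}` for some `α_i > 0` (here `f i` has leading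
term `X i.rev ^ α i`, i.e. leading monomial `Finsupp.single i.rev (α i)` and leading
coefficient `1`). -/
theorem stmt_13 (K : Type*) [Field K] (n : ℕ)
    (m : Ideal (MvPolynomial (Fin n) K)) (hm : m.IsMaximal)
    (G : Finset (MvPolynomial (Fin n) K)) (hG : IsMinimalGroebnerBasis m G) :
    G.card = n ∧
      ∃ (f : Fin n → MvPolynomial (Fin n) K) (α : Fin n → ℕ),
        (∀ i, 0 < α i) ∧ (G : Set (MvPolynomial (Fin n) K)) = Set.range f ∧
          ∀ i, leadingMonomial (f i) = Finsupp.single i.rev (α i) ∧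
            coeff (leadingMonomial (f i)) (f i) = 1 := by
  classical
  choose f hfG α hα hf using hG.1.exists_leadingMonomial_eq_single hm
  have hf_inj : Function.Injective f := fun i j hij => by
    have := (hf i).symm.trans (hij ▸ hf j)
    exact ((Finsupp.single_eq_single_iff _ _ _ _).mp this).elim And.left
      fun h => absurd h.1 (hα i).ne'
  have hG_range : (G : Set (MvPolynomial (Fin n) K)) = Set.range f := by
    refine subset_antisymm (fun g hg => ?_) (Set.range_subset_iff.mpr hfG)
    obtain ⟨i, b, -, hgi⟩ := hG.exists_leadingMonomial_eq_single hm hg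
    exact ⟨i, hG.eq_of_leadingMonomial_eq_single (hfG i) hg (hf i) hgi⟩
  have hG_image : G = Finset.univ.image f := by
    rw [← Finset.coe_inj, hG_range, Finset.coe_image, Finset.coe_univ, Set.image_univ]
  refine ⟨?_, f ∘ Fin.rev, α ∘ Fin.rev, fun i => hα _, ?_,
    fun i => ⟨hf _, (hG.2.1 _ (hfG _)).2⟩⟩
  · rw [hG_image, Finset.card_image_of_injective _ hf_inj, Finset.card_univ, Fintype.card_fin]
  · rw [hG_range, Fin.rev_surjective.range_comp]
end
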